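/- arXiv:2103.11158 — 2 statements merged into one kernel-verified Lean document; each statement's English description precedes it below -/
import Mathlib

section
/- Let Q ≤ P be discrete p-toral groups. Then Out_P(Q) := Aut_P(Q)/Inn(Q) is a finite p-group, where Aut_P(Q) is the group of automorphisms of Q induced by conjugation by elements of N_P(Q). -/
/-- ℚ/ℤ as an additive group. -/
abbrev QmodZ : Type := ℚ ⧸ AddSubgroup.zmultiples (1 : ℚ)

/-- The Prüfer p-group ℤ/p^∞, realized as the p-primary component of ℚ/ℤ,
written multiplicatively. -/
def Prufer (p : ℕ) [Fact p.Prime] : Type :=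
  Multiplicative (AddCommGroup.primaryComponent QmodZ p)

instance (p : ℕ) [Fact p.Prime] : CommGroup (Prufer p) :=
  Multiplicative.commGroup

/-- A group `S` is *discrete p-toral* if it has a normal subgroup `S₀` isomorphic to a
finite direct product of copies of `ℤ/p^∞` such that `S/S₀` is a finite `p`-group. -/
def IsDiscretePToral (p : ℕ) [Fact p.Prime] (S : Type*) [Group S] : Prop :=
  ∃ S₀ : Subgroup S, ∃ _ : S₀.Normal,
    (∃ r : ℕ, Nonempty (S₀ ≃* (Fin r → Prufer p))) ∧
    Finite (S ⧸ S₀) ∧ IsPGroup p (S ⧸ S₀)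

/-- The inner automorphisms form a normal subgroup of `MulAut G`. -/
instance conj_range_normal (G : Type*) [Group G] :
    ((MulAut.conj : G →* MulAut G).range).Normal := by
  constructor
  rintro n ⟨g, rfl⟩ α
  refine ⟨α g, ?_⟩
  ext x
  simp [mul_assoc]

/-!
Every element of `P` has `p`-power order, so `Out_P(Q)`, a quotient of `N_P(Q)`, is a `p`-group.

For finiteness let `S` be the torus: an abelian normal subgroup of finite index whose `n`-torsion
is finite for every `n`. For `t ∈ S ∩ N_P(Q)`, the map `q ↦ ⁅t, q⁆` is a crossed homomorphism
`Q → S ∩ Q` vanishing on `S ∩ Q`; averaging it over `Q ⧸ (S ∩ Q)` shows that `t ^ E`, where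
`E = [Q : S ∩ Q]`, acts on `Q` as an inner automorphism. Hence the image of `S ∩ N_P(Q)` in
`Out_P(Q)` is a quotient of the abelian torsion group `S ∩ N_P(Q)`, whose `E`-torsion is finite,
by a subgroup containing all `E`-th powers. Such a quotient is finite, because
`|B / B ^ E| = |B[E]|` for every finite subgroup `B`. Finally `S ∩ N_P(Q)` has finite index in
`N_P(Q)`.
-/

open scoped IsMulCommutative commutatorElement

theorem IsPGroup.pi {p : ℕ} {ι : Type*} [Finite ι] {G : ι → Type*} [∀ i, Group (G i)]
    (h : ∀ i, IsPGroup p (G i)) : IsPGroup p (∀ i, G i) := by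
  intro g
  choose k hk using fun i => h i (g i)
  obtain ⟨K, hK⟩ := Finite.exists_le k
  refine ⟨K, funext fun i => ?_⟩
  exact orderOf_dvd_iff_pow_eq_one.mp <|
    (orderOf_dvd_of_pow_eq_one (hk i)).trans (Nat.pow_dvd_pow p (hK i))

theorem IsPGroup.of_quotient {p : ℕ} {G : Type*} [Group G] {N : Subgroup G} [N.Normal]
    (hN : IsPGroup p N) (hG : IsPGroup p (G ⧸ N)) : IsPGroup p G := by
  have := (hG.to_subgroup ⊤).comap_of_ker_isPGroup (QuotientGroup.mk' N)
    (by rwa [QuotientGroup.ker_mk'])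
  rw [Subgroup.comap_top] at this
  exact this.of_equiv Subgroup.topEquiv

namespace Prufer

variable (p : ℕ) [Fact p.Prime]

theorem isPGroup : IsPGroup p (Prufer p) := fun g => by
  obtain ⟨n, hn⟩ := (Multiplicative.toAdd g).2
  exact ⟨n, Multiplicative.toAdd.injective (Subtype.ext hn)⟩

theorem finite_setOf_pow_eq_one {n : ℕ} (hn : 0 < n) : {y : Prufer p | y ^ n = 1}.Finite := by
  let toQmodZ : Prufer p → QmodZ := fun y => (Multiplicative.toAdd y :)
  refine ((AddCircle.finite_torsion (1 : ℚ) hn).preimage (f := toQmodZ) ?_).subset ?_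
  · exact fun a _ b _ h => Multiplicative.toAdd.injective (Subtype.ext h)
  · exact fun y (hy : y ^ n = 1) => (congrArg toQmodZ hy :)

end Prufer

section BoundedTorsion

variable {G M : Type*} [Group G] [IsMulCommutative G] [Group M] {n : ℕ}

theorem card_range_le_card_ker_powMonoidHom [Finite G] (f : G →* M) (hf : ∀ x, f x ^ n = 1) :
    Nat.card f.range ≤ Nat.card (powMonoidHom n : G →* G).ker := by
  rw [← Subgroup.index_ker, ← Subgroup.index_range]
  refine Subgroup.index_antitone ?_
  rintro _ ⟨x, rfl⟩
  exact (map_pow f x n).trans (hf x)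

theorem finite_range_of_pow_eq_one (hG : IsMulTorsion G) (hn : {x : G | x ^ n = 1}.Finite)
    (f : G →* M) (hf : ∀ x, f x ^ n = 1) : Finite f.range := by
  have := hn.to_subtype
  by_contra h
  rw [not_finite_iff_infinite] at h
  obtain ⟨s, hs⟩ := Infinite.exists_subset_card_eq f.range (Nat.card {x : G | x ^ n = 1} + 1)
  choose g hg using fun y : s => (y : f.range).2
  let B := Subgroup.closure (Set.range g)
  have : Group.FG B := Group.closure_finite_fg _
  have : Finite B := CommGroup.finite_of_fg_isMulTorsion B (hG.subgroup B)
  have : Finite (f.comp B.subtype).range :=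
    .of_surjective _ (f.comp B.subtype).rangeRestrict_surjective
  have hs_le : s.card ≤ Nat.card (f.comp B.subtype).range := by
    rw [← Nat.card_eq_finsetCard]
    refine Nat.card_le_card_of_injective
      (fun y => ⟨y, ⟨g y, Subgroup.subset_closure ⟨y, rfl⟩⟩, hg y⟩) fun y z h => ?_
    exact Subtype.val_injective (Subtype.val_injective (congrArg Subtype.val h :))
  have hker_le : Nat.card (powMonoidHom n : B →* B).ker ≤ Nat.card {x : G | x ^ n = 1} := by
    refine Nat.card_le_card_of_injective
      (fun x => ⟨x.1, congrArg Subtype.val x.2⟩) fun y z h => ?_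
    exact Subtype.val_injective (Subtype.val_injective (congrArg Subtype.val h :))
  have := card_range_le_card_ker_powMonoidHom (f.comp B.subtype) (fun x => hf x)
  omega

end BoundedTorsion

theorem exists_pow_index_eq_mul_inv_of_crossedHom {G A : Type*} [Group G] [CommGroup A]
    (φ : G →* MulAut A) (H : Subgroup G) [H.FiniteIndex] (d : G → A)
    (hd : ∀ g₁ g₂, d (g₁ * g₂) = d g₁ * φ g₁ (d g₂)) (hH : ∀ h ∈ H, d h = 1) :
    ∃ z : A, ∀ g, d g ^ H.index = z * (φ g z)⁻¹ := by
  have : Fintype (G ⧸ H) := Fintype.ofFinite _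
  let d' : G ⧸ H → A := fun x => Quotient.liftOn' x d fun a b hab => by
    rw [← mul_inv_cancel_left a b, hd, hH _ ((QuotientGroup.leftRel_apply).mp hab), map_one,
      mul_one]
  have hd' (g : G) (x : G ⧸ H) : d' (g • x) = d g * φ g (d' x) :=
    QuotientGroup.induction_on x fun a => hd g a
  refine ⟨∏ x, d' x, fun g => eq_mul_inv_of_mul_eq ?_⟩
  calc d g ^ H.index * φ g (∏ x, d' x) = ∏ x, d' (g • x) := by
        simp only [hd', Finset.prod_mul_distrib, Finset.prod_const, Finset.card_univ, map_prod,
          H.index_eq_card, Nat.card_eq_fintype_card]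
    _ = ∏ x, d' x := Equiv.prod_comp (MulAction.toPerm g) d'

theorem commutatorElement_pow {G : Type*} [Group G] {t q : G} (h : Commute t (q * t⁻¹ * q⁻¹))
    (n : ℕ) : ⁅t, q⁆ ^ n = ⁅t ^ n, q⁆ := by
  rw [show ⁅t, q⁆ = t * (q * t⁻¹ * q⁻¹) by group, h.mul_pow, conj_pow, inv_pow,
    commutatorElement_def]
  group

namespace Subgroup

section ConjugationByTorus

variable {P : Type*} [Group P] {S Q : Subgroup P} [S.Normal] {t : P}

theorem commutatorElement_mem_inf {q : P} (htS : t ∈ S) (htQ : t ∈ normalizer (Q : Set P))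
    (hq : q ∈ Q) : ⁅t, q⁆ ∈ S ⊓ Q := by
  rw [commutatorElement_def]
  refine mem_inf.mpr ⟨?_, mul_mem ((mem_normalizer_iff.mp htQ q).mp hq) (inv_mem hq)⟩
  rw [mul_assoc t, mul_assoc t]
  exact mul_mem htS (by simpa [mul_assoc] using (‹S.Normal›.conj_mem _ (inv_mem htS) q))

theorem exists_mem_forall_conj_pow_relIndex_eq [IsMulCommutative S] [S.IsFiniteRelIndex Q]
    (htS : t ∈ S) (htQ : t ∈ normalizer (Q : Set P)) :
    ∃ z ∈ Q, ∀ q ∈ Q, t ^ S.relIndex Q * q * (t ^ S.relIndex Q)⁻¹ = z * q * z⁻¹ := by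
  let K := S.subgroupOf Q
  let d : Q → K := fun q => ⟨⟨⁅t, (q : P)⁆, (commutatorElement_mem_inf htS htQ q.2).2⟩,
    (commutatorElement_mem_inf htS htQ q.2).1⟩
  have hd (q₁ q₂ : Q) : d (q₁ * q₂) = d q₁ * MulAut.conjNormal q₁ (d q₂) := by
    ext
    simp only [d, coe_mul, coe_inv, MulAut.conjNormal_apply, commutatorElement_def]
    group
  have hdK (k : Q) (hk : k ∈ K) : d k = 1 := by
    ext
    exact commutatorElement_eq_one_iff_mul_comm.mpr (setLike_mul_comm htS hk)
  obtain ⟨z, hz⟩ := exists_pow_index_eq_mul_inv_of_crossedHom MulAut.conjNormal K d hd hdK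
  refine ⟨z, (z : Q).2, fun q hq => ?_⟩
  have hS : Commute t (q * t⁻¹ * q⁻¹) :=
    setLike_mul_comm htS (‹S.Normal›.conj_mem _ (inv_mem htS) q)
  have := congrArg (fun x : K => ((x : Q) : P)) (hz ⟨q, hq⟩)
  simp only [d, coe_pow, MulAut.conjNormal_apply, coe_mul, coe_inv, commutatorElement_pow hS]
    at this
  rw [commutatorElement_def] at this
  exact (mul_inv_eq_iff_eq_mul.mp this).trans (by group)

end ConjugationByTorus

variable {P : Type*} [Group P] (Q : Subgroup P)

def OutP : Type _ :=
  Q.normalizerMonoidHom.range ⧸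
    ((MulAut.conj : Q →* MulAut Q).range).subgroupOf Q.normalizerMonoidHom.range

instance : Group Q.OutP := QuotientGroup.Quotient.group _

def toOutP : normalizer (Q : Set P) →* Q.OutP :=
  (QuotientGroup.mk' _).comp Q.normalizerMonoidHom.rangeRestrict

theorem toOutP_surjective : Function.Surjective Q.toOutP :=
  (QuotientGroup.mk'_surjective _).comp Q.normalizerMonoidHom.rangeRestrict_surjective

variable {Q}

theorem toOutP_eq_one {g : normalizer (Q : Set P)} {z : P} (hz : z ∈ Q)
    (h : ∀ q ∈ Q, g * q * (g : P)⁻¹ = z * q * z⁻¹) : Q.toOutP g = 1 := by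
  refine (QuotientGroup.eq_one_iff (Q.normalizerMonoidHom.rangeRestrict g)).mpr ?_
  refine ⟨⟨z, hz⟩, MulEquiv.ext fun q => Subtype.ext ?_⟩
  exact (h q q.2).symm

theorem finite_outP_of_isMulCommutative {S : Subgroup P} [S.Normal] [IsMulCommutative S]
    [S.FiniteIndex] (hS : IsMulTorsion S) (hSn : ∀ n, 0 < n → {s : S | s ^ n = 1}.Finite) :
    Finite Q.OutP := by
  have := isFiniteRelIndex_of_finiteIndex (H := S) (K := Q)
  let A := S.subgroupOf (normalizer (Q : Set P))
  let ι : A →* S := ((normalizer (Q : Set P)).subtype.comp A.subtype).codRestrict S fun a => a.2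
  have hι : Function.Injective ι := fun a b h =>
    Subtype.val_injective (Subtype.val_injective (congrArg Subtype.val h :))
  have hf (a : A) : Q.toOutP.comp A.subtype a ^ S.relIndex Q = 1 := by
    obtain ⟨z, hz, hconj⟩ := exists_mem_forall_conj_pow_relIndex_eq (Q := Q) a.2
      (a : normalizer (Q : Set P)).2
    rw [← map_pow]
    exact toOutP_eq_one hz hconj
  have hA : {a : A | a ^ S.relIndex Q = 1}.Finite :=
    ((hSn _ (Nat.pos_of_ne_zero relIndex_ne_zero)).preimage hι.injOn).subset
      fun a (ha : a ^ S.relIndex Q = 1) => show ι a ^ _ = 1 by rw [← map_pow, ha, map_one]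
  have hfin := finite_range_of_pow_eq_one (fun a => hι.isOfFinOrder_iff.mp (hS (ι a))) hA _ hf
  rw [MonoidHom.range_comp, range_subtype] at hfin
  have : (A.map Q.toOutP).FiniteIndex :=
    ⟨ne_zero_of_dvd_ne_zero FiniteIndex.index_ne_zero (A.index_map_dvd Q.toOutP_surjective)⟩
  exact (finite_iff_finite_and_finiteIndex (A.map Q.toOutP)).mpr ⟨hfin, this⟩

end Subgroup

/-- For discrete `p`-toral groups `Q ≤ P`, the group `Out_P(Q) = Aut_P(Q)/Inn(Q)` is a
finite `p`-group, where `Aut_P(Q)` is the group of automorphisms of `Q` induced by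
conjugation by elements of `N_P(Q)`. -/
theorem outP_finite_pGroup (p : ℕ) [Fact p.Prime] (P : Type*) [Group P]
    (hP : IsDiscretePToral p P) (Q : Subgroup P) :
    Finite ((Subgroup.normalizerMonoidHom Q).range ⧸
        ((MulAut.conj : ↥Q →* MulAut ↥Q).range).subgroupOf
          (Subgroup.normalizerMonoidHom Q).range) ∧
      IsPGroup p ((Subgroup.normalizerMonoidHom Q).range ⧸
        ((MulAut.conj : ↥Q →* MulAut ↥Q).range).subgroupOf
          (Subgroup.normalizerMonoidHom Q).range) := by
  obtain ⟨S, _, ⟨r, ⟨e⟩⟩, _, hPS⟩ := hP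
  have hS : IsPGroup p S := (IsPGroup.pi fun _ => Prufer.isPGroup p).of_equiv e.symm
  have : IsMulCommutative S := ⟨⟨fun a b => e.injective (by simp only [map_mul, mul_comm])⟩⟩
  have : S.FiniteIndex := Subgroup.finiteIndex_of_finite_quotient
  have hSn (n : ℕ) (hn : 0 < n) : {s : S | s ^ n = 1}.Finite :=
    ((Set.Finite.pi fun _ => Prufer.finite_setOf_pow_eq_one p hn).preimage
      e.injective.injOn).subset fun s (hs : s ^ n = 1) i _ =>
        congrFun (show e s ^ n = 1 by rw [← map_pow, hs, map_one]) i
  exact ⟨Q.finite_outP_of_isMulCommutative (hS.isOfFinOrder (Fact.out : p.Prime).ne_zero) hSn,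
    ((hS.of_quotient hPS).to_subgroup _).of_surjective _ Q.toOutP_surjective⟩
end

section
/- Let S be a group decomposed as an internal direct product S = S₁ × S₂, and let P ≤ S be a subgroup containing its centralizer (C_S(P) ≤ P). Define Z̃ₙ(P) inductively by Z̃₀(P) = 1 and Z̃ₙ(P)/Z̃ₙ₋₁(P) = Ω₁(Z(P/Z̃ₙ₋₁(P))). Let P̄ = pr₁(P) × pr₂(P) where prᵢ are the projections. Then Z̃ₙ(P) = P ∩ Z̃ₙ(P̄) for all n ≥ 0. -/
/-- `Ω₁(Z(G))`: the subgroup of the center of `G` generated by the elements `x`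
with `x ^ p = 1`. -/
def omegaOneCenter (p : ℕ) (G : Type*) [Group G] : Subgroup G :=
  Subgroup.closure {x : G | x ∈ Subgroup.center G ∧ x ^ p = 1}

theorem omegaOneCenter_le_center (p : ℕ) (G : Type*) [Group G] :
    omegaOneCenter p G ≤ Subgroup.center G :=
  (Subgroup.closure_le _).2 fun _ hx => hx.1

instance omegaOneCenter_normal (p : ℕ) (G : Type*) [Group G] :
    (omegaOneCenter p G).Normal := by
  constructor
  intro n hn g
  have hc := Subgroup.mem_center_iff.mp (omegaOneCenter_le_center p G hn) g
  rw [hc, mul_inv_cancel_right]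
  exact hn

/-- The ascending chain `Z̃ₙ(S)`: `Z̃₀(S) = 1` and
`Z̃ₙ(S)/Z̃ₙ₋₁(S) = Ω₁(Z(S/Z̃ₙ₋₁(S)))`, packaged with a proof of normality. -/
def ZtilAux (p : ℕ) (S : Type*) [Group S] : ℕ → {H : Subgroup S // H.Normal}
  | 0 => ⟨⊥, inferInstance⟩
  | n + 1 =>
    let Z := ZtilAux p S n
    haveI := Z.2
    ⟨(omegaOneCenter p (S ⧸ Z.1)).comap (QuotientGroup.mk' Z.1),
      Subgroup.Normal.comap (omegaOneCenter_normal p _) _⟩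

/-- `Z̃ₙ(S)`, as a subgroup of `S`. -/
def Ztil (p : ℕ) (S : Type*) [Group S] (n : ℕ) : Subgroup S := (ZtilAux p S n).1

/-!
Membership in `Z̃ₙ₊₁` is tested by `x ∈ Z̃ₙ₊₁ ↔ (∀ y, ⁅x, y⁆ ∈ Z̃ₙ) ∧ xᵖ ∈ Z̃ₙ`, and this test is
transported along homomorphisms: by induction on `n`, surjections map `Z̃ₙ` into `Z̃ₙ`,
injections pull `Z̃ₙ` back into `Z̃ₙ`, and `Z̃ₙ(G₁ × G₂) = Z̃ₙ(G₁) × Z̃ₙ(G₂)`. So for a subdirect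
product `G ≤ H₁ × H₂` we get `Z̃ₙ(G) = G ∩ (Z̃ₙ(H₁) × Z̃ₙ(H₂))`. Apply this to
`P ≤ P̄ ≅ pr₁(P) × pr₂(P)`, where the isomorphism carries `Z̃ₙ(P̄)` onto `Z̃ₙ(pr₁(P)) × Z̃ₙ(pr₂(P))`.
-/

open Subgroup
open scoped commutatorElement

section Ztil

variable {p : ℕ} {G H : Type*} [Group G] [Group H]

theorem mem_omegaOneCenter {x : G} :
    x ∈ omegaOneCenter p G ↔ x ∈ center G ∧ x ^ p = 1 := by
  refine ⟨fun hx => ?_, fun hx => Subgroup.subset_closure hx⟩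
  induction hx using closure_induction with
  | mem _ hx => exact hx
  | one => exact ⟨one_mem _, one_pow p⟩
  | mul a b _ _ ha hb =>
    have hab : Commute a b := (mem_center_iff.mp ha.1 b).symm
    exact ⟨mul_mem ha.1 hb.1, by rw [hab.mul_pow, ha.2, hb.2, one_mul]⟩
  | inv a _ ha => exact ⟨inv_mem ha.1, by rw [inv_pow, ha.2, inv_one]⟩

instance Ztil_normal (p : ℕ) (G : Type*) [Group G] (n : ℕ) : (Ztil p G n).Normal :=
  (ZtilAux p G n).2

theorem Ztil_zero : Ztil p G 0 = ⊥ := rfl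

theorem mem_Ztil_succ {n : ℕ} {x : G} :
    x ∈ Ztil p G (n + 1) ↔ (∀ y, ⁅x, y⁆ ∈ Ztil p G n) ∧ x ^ p ∈ Ztil p G n := by
  change x ∈ (omegaOneCenter p (G ⧸ Ztil p G n)).comap (QuotientGroup.mk' _) ↔ _
  rw [mem_comap, mem_omegaOneCenter, ← mem_comap,
    ← Subgroup.upperCentralSeriesStep_eq_comap_center, Subgroup.mem_upperCentralSeriesStep,
    QuotientGroup.mk'_apply, ← QuotientGroup.mk_pow, QuotientGroup.eq_one_iff]

theorem Ztil_le_comap_of_surjective {f : G →* H} (hf : Function.Surjective f) (n : ℕ) :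
    Ztil p G n ≤ (Ztil p H n).comap f := by
  induction n with
  | zero => exact bot_le
  | succ n ih =>
    intro x hx
    rw [mem_Ztil_succ] at hx
    rw [mem_comap, mem_Ztil_succ, ← map_pow]
    refine ⟨fun y => ?_, ih hx.2⟩
    obtain ⟨g, rfl⟩ := hf y
    rw [← map_commutatorElement]
    exact ih (hx.1 g)

theorem comap_Ztil_le_of_injective {f : G →* H} (hf : Function.Injective f) (n : ℕ) :
    (Ztil p H n).comap f ≤ Ztil p G n := by
  induction n with
  | zero =>
    intro x hx
    rw [mem_comap, Ztil_zero, mem_bot, ← map_one f] at hx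
    exact hf hx
  | succ n ih =>
    intro x hx
    rw [mem_comap, mem_Ztil_succ] at hx
    rw [mem_Ztil_succ]
    refine ⟨fun y => ih ?_, ih ?_⟩
    · rw [mem_comap, map_commutatorElement]
      exact hx.1 (f y)
    · rw [mem_comap, map_pow]
      exact hx.2

theorem comap_Ztil_mulEquiv (e : G ≃* H) (n : ℕ) :
    (Ztil p H n).comap (e : G →* H) = Ztil p G n :=
  le_antisymm (comap_Ztil_le_of_injective e.injective n)
    (Ztil_le_comap_of_surjective e.surjective n)

theorem Ztil_prod (G₁ G₂ : Type*) [Group G₁] [Group G₂] (n : ℕ) :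
    Ztil p (G₁ × G₂) n = (Ztil p G₁ n).prod (Ztil p G₂ n) := by
  induction n with
  | zero => exact bot_prod_bot.symm
  | succ n ih =>
    ext ⟨a, b⟩
    simp only [mem_prod, mem_Ztil_succ, ih, Prod.forall]
    constructor
    · rintro ⟨hcomm, hpow₁, hpow₂⟩
      exact ⟨⟨fun c => (hcomm c 1).1, hpow₁⟩, fun d => (hcomm 1 d).2, hpow₂⟩
    · rintro ⟨⟨hcomm₁, hpow₁⟩, hcomm₂, hpow₂⟩
      exact ⟨fun c d => ⟨hcomm₁ c, hcomm₂ d⟩, hpow₁, hpow₂⟩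

theorem Ztil_eq_comap_of_subdirect {H₁ H₂ : Type*} [Group H₁] [Group H₂] {f : G →* H₁ × H₂}
    (hf : Function.Injective f) (hf₁ : Function.Surjective ((MonoidHom.fst H₁ H₂).comp f))
    (hf₂ : Function.Surjective ((MonoidHom.snd H₁ H₂).comp f)) (n : ℕ) :
    Ztil p G n = (Ztil p (H₁ × H₂) n).comap f := by
  refine le_antisymm (fun x hx => ?_) (comap_Ztil_le_of_injective hf n)
  rw [mem_comap, Ztil_prod, mem_prod]
  exact ⟨Ztil_le_comap_of_surjective hf₁ n hx, Ztil_le_comap_of_surjective hf₂ n hx⟩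

end Ztil

theorem map_subtype_comap_inclusion {G : Type*} [Group G] {H K : Subgroup G} (h : H ≤ K)
    (L : Subgroup K) : (L.comap (inclusion h)).map H.subtype = H ⊓ L.map K.subtype := by
  ext x
  constructor
  · rintro ⟨y, hy, rfl⟩
    exact ⟨y.2, inclusion h y, hy, rfl⟩
  · rintro ⟨hx, y, hy, rfl⟩
    exact ⟨⟨y, hx⟩, hy, rfl⟩

theorem Ztil_eq_inf_Ztil_prod_general (p : ℕ)
    (S₁ S₂ : Type*) [Group S₁] [Group S₂] (P : Subgroup (S₁ × S₂)) :
    ∀ n : ℕ,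
      (Ztil p (↥P) n).map P.subtype =
        P ⊓ (Ztil p (↥((P.map (MonoidHom.fst S₁ S₂)).prod (P.map (MonoidHom.snd S₁ S₂)))) n).map
            ((P.map (MonoidHom.fst S₁ S₂)).prod (P.map (MonoidHom.snd S₁ S₂))).subtype := by
  intro n
  set P₁ := P.map (MonoidHom.fst S₁ S₂)
  set P₂ := P.map (MonoidHom.snd S₁ S₂)
  have hle : P ≤ P₁.prod P₂ := fun x hx => ⟨⟨x, hx, rfl⟩, x, hx, rfl⟩
  let f : P →* P₁ × P₂ := (prodEquiv P₁ P₂ : P₁.prod P₂ →* P₁ × P₂).comp (inclusion hle)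
  have hf : Function.Injective f := (prodEquiv P₁ P₂).injective.comp (inclusion_injective hle)
  have hP : Ztil p P n = (Ztil p (P₁.prod P₂) n).comap (inclusion hle) := by
    rw [Ztil_eq_comap_of_subdirect hf ((MonoidHom.fst S₁ S₂).subgroupMap_surjective P)
      ((MonoidHom.snd S₁ S₂).subgroupMap_surjective P), ← comap_Ztil_mulEquiv (prodEquiv P₁ P₂),
      comap_comap]
  rw [hP, map_subtype_comap_inclusion]

/-- Let `S = S₁ × S₂` and let `P ≤ S` contain its centralizer. With
`P̄ = pr₁(P) × pr₂(P)`, we have `Z̃ₙ(P) = P ∩ Z̃ₙ(P̄)` for all `n`. -/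
theorem Ztil_eq_inf_Ztil_prod (p : ℕ) [Fact p.Prime]
    (S₁ S₂ : Type*) [Group S₁] [Group S₂] (P : Subgroup (S₁ × S₂))
    (hcent : Subgroup.centralizer (P : Set (S₁ × S₂)) ≤ P) :
    ∀ n : ℕ,
      (Ztil p (↥P) n).map P.subtype =
        P ⊓ (Ztil p (↥((P.map (MonoidHom.fst S₁ S₂)).prod (P.map (MonoidHom.snd S₁ S₂)))) n).map
            ((P.map (MonoidHom.fst S₁ S₂)).prod (P.map (MonoidHom.snd S₁ S₂))).subtype :=
  Ztil_eq_inf_Ztil_prod_general p S₁ S₂ P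
end
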